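/- arXiv:cs/0612051 — 2 statements merged into one kernel-verified Lean document; each statement's English description precedes it below -/
import Mathlib

section
/- Let C ⊆ GF(q^m)^n be an MRD code (possibly nonlinear) with n ≤ m, |C| = q^{mk}, redundancy r = n - k, and minimum rank distance d = n - k + 1. Then for every u ≥ d, the number A_u of codewords in C of rank u satisfies A_u ≤ [n choose u]_q · A(m, u - r). -/
noncomputable def Aq (q m u : ℕ) : ℝ := ∏ i ∈ Finset.range u, ((q:ℝ)^m - (q:ℝ)^i)

noncomputable def Kq (q : ℕ) : ℝ := ∏' j : ℕ, (1 - ((q:ℝ))⁻¹ ^ (j+1))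

noncomputable def gaussBinom (q n t : ℕ) : ℝ := Aq q n t / Aq q t t

noncomputable def rk (Fq : Type*) {F : Type*} [Field Fq] [Field F] [Algebra Fq F] {n : ℕ} (x : Fin n → F) : ℕ :=
  Module.finrank Fq (Submodule.span Fq (Set.range x))

def IsElementary (Fq : Type*) {F : Type*} [Field Fq] [Field F] [Algebra Fq F] {n : ℕ} (V : Submodule F (Fin n → F)) : Prop :=
  ∃ b : Module.Basis (Fin (Module.finrank F V)) F V,
    ∀ i j, ((b i : Fin n → F) j) ∈ Set.range (algebraMap Fq F)

/-!
A word `c ∈ L^n` of rank `u` is determined by its row space `V ⊆ K^n`, the `u`-dimensional span of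
the rows of the matrix expanding `c` over a `K`-basis of `L`, together with its coefficients
`y ∈ L^u` with respect to a fixed basis of `V`; these coefficients are `K`-linearly independent.
If two codewords share `V` and the first `u - r` coefficients, their difference is a combination
of the remaining `r` basis vectors, hence has rank at most `r`, so in a code of minimum rank
distance `r + 1` they coincide. There are at most `[n choose u]_q` choices for `V` and
`A(m, u - r)` for the first `u - r` coefficients.
-/

open Module Submodule Set Finset

theorem Submodule.span_range_coe_eq_of_span_eq_top {R M ι : Type*} [Semiring R] [AddCommMonoid M]
    [Module R M] {V : Submodule R M} {v : ι → V} (hv : span R (range v) = ⊤) :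
    span R (range fun i => (v i : M)) = V := by
  rw [show (range fun i => (v i : M)) = V.subtype '' range v from range_comp _ _, span_image, hv,
    map_top, range_subtype]

theorem Set.finrank_range_le_card_of_eq_zero {K M ι : Type*} [DivisionRing K] [AddCommGroup M]
    [Module K M] (z : ι → M) (s : Finset ι) (hz : ∀ i ∉ s, z i = 0) :
    (range z).finrank K ≤ s.card := by
  classical
  have hle : span K (range z) ≤ span K (s.image z : Set M) := by
    refine span_le.mpr ?_
    rintro _ ⟨i, rfl⟩
    by_cases hi : i ∈ s
    · exact subset_span (Finset.mem_coe.mpr (Finset.mem_image_of_mem z hi))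
    · exact hz i hi ▸ zero_mem _
  exact (Submodule.finrank_mono hle).trans ((finrank_span_finset_le_card _).trans card_image_le)

section Counting

theorem Aq_eq_zero {q m t : ℕ} (h : m < t) : Aq q m t = 0 :=
  prod_eq_zero (mem_range.mpr h) (sub_self _)

theorem Aq_pos {q m t : ℕ} (hq : 1 < q) (h : t ≤ m) : 0 < Aq q m t :=
  prod_pos fun _ hi => sub_pos.mpr <|
    pow_lt_pow_right₀ (Nat.one_lt_cast.mpr hq) ((mem_range.mp hi).trans_le h)

theorem cast_prod_pow_sub_pow_eq_Aq {q m t : ℕ} (hq : 1 ≤ q) (h : t ≤ m) :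
    ((∏ i : Fin t, (q ^ m - q ^ i.val) : ℕ) : ℝ) = Aq q m t := by
  rw [Nat.cast_prod, Aq, ← Fin.prod_univ_eq_prod_range]
  refine prod_congr rfl fun i _ => ?_
  rw [Nat.cast_sub (Nat.pow_le_pow_right hq (by omega)), Nat.cast_pow, Nat.cast_pow]

variable {K W : Type*} [Field K] [Fintype K] [AddCommGroup W] [Module K W] [Finite W]

theorem card_linearIndependent_eq_Aq (t : ℕ) :
    (Nat.card {v : Fin t → W // LinearIndependent K v} : ℝ) =
      Aq (Fintype.card K) (finrank K W) t := by
  rcases le_or_gt t (finrank K W) with ht | ht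
  · rw [card_linearIndependent ht, cast_prod_pow_sub_pow_eq_Aq Fintype.card_pos ht]
  · have : IsEmpty {v : Fin t → W // LinearIndependent K v} :=
      ⟨fun v => lt_irrefl _ (ht.trans_le (by simpa using v.2.fintype_card_le_finrank))⟩
    rw [Nat.card_of_isEmpty, Nat.cast_zero, Aq_eq_zero ht]

theorem card_submodule_finrank_eq_mul_le (u : ℕ) :
    Nat.card {V : Submodule K W // finrank K V = u} *
        ∏ i : Fin u, (Fintype.card K ^ u - Fintype.card K ^ i.val) ≤
      Nat.card {v : Fin u → W // LinearIndependent K v} := by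
  classical
  let Bases := Σ V : {V : Submodule K W // finrank K V = u},
    {v : Fin u → V.1 // LinearIndependent K v}
  have hBases : Nat.card Bases = Nat.card {V : Submodule K W // finrank K V = u} *
      ∏ i : Fin u, (Fintype.card K ^ u - Fintype.card K ^ i.val) := by
    have := Fintype.ofFinite {V : Submodule K W // finrank K V = u}
    rw [Nat.card_sigma, Nat.card_eq_fintype_card, ← smul_eq_mul, ← Finset.card_univ,
      ← sum_const]
    exact sum_congr rfl fun V _ => by rw [card_linearIndependent V.2.ge, V.2]
  rw [← hBases]
  refine Nat.card_le_card_of_injective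
    (fun p => ⟨fun i => (p.2.1 i : W), p.2.2.map' _ (ker_subtype _)⟩) ?_
  rintro ⟨V, v⟩ ⟨V', v'⟩ h
  have hcoe : (fun i => (v.1 i : W)) = fun i => (v'.1 i : W) := congrArg Subtype.val h
  have hspan (V : {V : Submodule K W // finrank K V = u})
      (v : {v : Fin u → V.1 // LinearIndependent K v}) : span K (range fun i => (v.1 i : W)) = V :=
    span_range_coe_eq_of_span_eq_top (v.2.span_eq_top_of_card_eq_finrank' (by simp [V.2]))
  obtain rfl : V = V' := Subtype.ext (by rw [← hspan V v, ← hspan V' v', hcoe])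
  exact congrArg (Sigma.mk V) (Subtype.ext (funext fun i => Subtype.ext (congrFun hcoe i)))

theorem card_submodule_finrank_eq_le_gaussBinom (u : ℕ) :
    (Nat.card {V : Submodule K W // finrank K V = u} : ℝ) ≤
      gaussBinom (Fintype.card K) (finrank K W) u := by
  have hAuu := cast_prod_pow_sub_pow_eq_Aq (m := u) (Fintype.card_pos (α := K)) le_rfl
  rw [gaussBinom, le_div_iff₀ (Aq_pos (Fintype.one_lt_card (α := K)) le_rfl), ← hAuu,
    ← card_linearIndependent_eq_Aq]
  exact_mod_cast card_submodule_finrank_eq_mul_le u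

end Counting

section RowSpace

variable {K L : Type*} [Field K] [Field L] [Algebra K L] {n : ℕ}

theorem rk_sum_smul_le {u : ℕ} (y : Fin u → L) (g : Fin u → Fin n → K) :
    rk K (∑ i, y i • (algebraMap K L ∘ g i)) ≤ (range y).finrank K := by
  have := FiniteDimensional.span_of_finite K (finite_range y)
  refine Submodule.finrank_mono (span_le.mpr ?_)
  rintro _ ⟨j, rfl⟩
  simp only [Finset.sum_apply, Pi.smul_apply, Function.comp_apply, smul_eq_mul, SetLike.mem_coe]
  exact sum_mem fun i _ => by
    rw [mul_comm, ← Algebra.smul_def]; exact smul_mem _ _ (subset_span (mem_range_self i))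

theorem rk_sum_smul_sub_le {u : ℕ} {y y' : Fin u → L} (g : Fin u → Fin n → K) (s : Finset (Fin u))
    (h : ∀ i ∉ s, y i = y' i) :
    rk K (∑ i, y i • (algebraMap K L ∘ g i) - ∑ i, y' i • (algebraMap K L ∘ g i)) ≤ s.card := by
  simp only [← Finset.sum_sub_distrib, ← sub_smul]
  exact (rk_sum_smul_le (y - y') g).trans
    (finrank_range_le_card_of_eq_zero _ s fun i hi => sub_eq_zero.mpr (h i hi))

variable [FiniteDimensional K L]

variable (K) in
noncomputable def rowSpace (c : Fin n → L) : Submodule K (Fin n → K) :=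
  span K (range fun t j => (Free.chooseBasis K L).repr (c j) t)

theorem finrank_rowSpace (c : Fin n → L) : finrank K (rowSpace K c) = rk K c := by
  set B := Free.chooseBasis K L
  let M : Matrix (Free.ChooseBasisIndex K L) (Fin n) K := Matrix.of fun t j => B.repr (c j) t
  have hcols : M.col = B.equivFun ∘ c := by
    funext j t
    simp [M, Matrix.col, Basis.equivFun_apply]
  rw [rowSpace, show (range fun t j => B.repr (c j) t) = range M.row from rfl,
    ← Matrix.rank_eq_finrank_span_row, Matrix.rank_eq_finrank_span_cols, hcols, range_comp,
    span_image_linearEquiv, LinearEquiv.finrank_map_eq]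
  rfl

theorem exists_sum_smul_eq_of_rowSpace_le {c : Fin n → L} {u : ℕ} {g : Fin u → Fin n → K}
    (h : rowSpace K c ≤ span K (range g)) :
    ∃ y : Fin u → L, ∑ i, y i • (algebraMap K L ∘ g i) = c := by
  set B := Free.chooseBasis K L
  choose a ha using fun t => (mem_span_range_iff_exists_fun K).mp
    (h (subset_span (mem_range_self (f := fun t j => B.repr (c j) t) t)))
  refine ⟨fun i => ∑ t, a t i • B t, funext fun j => ?_⟩
  calc (∑ i, (∑ t, a t i • B t) • (algebraMap K L ∘ g i)) j
      = ∑ t, (∑ i, a t i • g i) j • B t := by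
        simp only [Finset.sum_apply, Pi.smul_apply, Function.comp_apply, Finset.sum_smul,
          smul_eq_mul]
        rw [Finset.sum_comm]
        refine sum_congr rfl fun t _ => sum_congr rfl fun i _ => ?_
        rw [Algebra.smul_def, Algebra.smul_def, map_mul]; ring
    _ = c j := by simp only [ha]; exact B.sum_repr (c j)

theorem exists_linearIndependent_sum_smul_eq {c : Fin n → L} {u : ℕ} (hc : rk K c = u)
    {g : Fin u → Fin n → K} (hg : rowSpace K c ≤ span K (range g)) :
    ∃ y : Fin u → L, LinearIndependent K y ∧ ∑ i, y i • (algebraMap K L ∘ g i) = c := by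
  obtain ⟨y, hy⟩ := exists_sum_smul_eq_of_rowSpace_le hg
  refine ⟨y, linearIndependent_iff_card_eq_finrank_span.mpr (le_antisymm ?_ ?_), hy⟩
  · have := rk_sum_smul_le y g
    rw [Fintype.card_fin]
    rwa [hy, hc] at this
  · simpa using finrank_range_le_card (R := K) y

end RowSpace

theorem card_rk_eq_le_of_lt_rk_sub {K L : Type*} [Field K] [Finite K] [Field L] [Algebra K L]
    [FiniteDimensional K L] {n r u : ℕ} (C : Set (Fin n → L))
    (hC : ∀ c ∈ C, ∀ c' ∈ C, c ≠ c' → r < rk K (c - c')) :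
    Nat.card {c : Fin n → L // c ∈ C ∧ rk K c = u} ≤
      Nat.card {V : Submodule K (Fin n → K) // finrank K V = u} *
        Nat.card {w : Fin (u - r) → L // LinearIndependent K w} := by
  classical
  have : Finite L := Module.finite_of_finite K
  let V (c : {c : Fin n → L // c ∈ C ∧ rk K c = u}) :
      {V : Submodule K (Fin n → K) // finrank K V = u} :=
    ⟨rowSpace K c.1, (finrank_rowSpace c.1).trans c.2.2⟩
  let g (V : {V : Submodule K (Fin n → K) // finrank K V = u}) (i : Fin u) : Fin n → K :=
    finBasisOfFinrankEq K V.1 V.2 i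
  choose y hy_li hy_eq using fun c => exists_linearIndependent_sum_smul_eq (g := g (V c)) c.2.2
    (span_range_coe_eq_of_span_eq_top (Basis.span_eq _)).ge
  let Φ (c : {c : Fin n → L // c ∈ C ∧ rk K c = u}) :
      {V : Submodule K (Fin n → K) // finrank K V = u} ×
        {w : Fin (u - r) → L // LinearIndependent K w} :=
    (V c, ⟨y c ∘ Fin.castLE (Nat.sub_le u r), (hy_li c).comp _ (Fin.castLE_injective _)⟩)
  refine (Nat.card_le_card_of_injective Φ fun c c' hΦ => ?_).trans_eq (Nat.card_prod _ _)
  by_contra hne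
  have hV : V c = V c' := congrArg Prod.fst hΦ
  have hy : y c ∘ Fin.castLE (Nat.sub_le u r) = y c' ∘ Fin.castLE (Nat.sub_le u r) :=
    congrArg (fun p => p.2.1) hΦ
  have hdist := hC c c.2.1 c' c'.2.1 (Subtype.coe_ne_coe.mpr hne)
  rw [← hy_eq c, ← hy_eq c', hV] at hdist
  have hrk := rk_sum_smul_sub_le (g (V c')) (univ.map (Fin.castLEEmb (Nat.sub_le u r)))ᶜ
    fun i hi => by
      obtain ⟨j, -, rfl⟩ := Finset.mem_map.mp (Finset.notMem_compl.mp hi)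
      exact congrFun hy j
  simp only [card_compl, card_map, card_univ, Fintype.card_fin] at hrk
  omega

theorem stmt14_general (q m n k u : ℕ) (Fq F : Type) [Field Fq] [Fintype Fq] [Field F] [Algebra Fq F]
    (hq : Fintype.card Fq = q) (hm : Module.finrank Fq F = m)
    (hk : 1 ≤ k) (hkn : k ≤ n) (hnm : n ≤ m)
    (C : Set (Fin n → F))
    (hMRD : ∀ c ∈ C, ∀ c' ∈ C, c ≠ c' → n - k + 1 ≤ rk Fq (c - c')) :
    (Nat.card {c : Fin n → F // c ∈ C ∧ rk Fq c = u} : ℝ) ≤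
      gaussBinom q n u * Aq q m (u - (n - k)) := by
  subst hq hm
  have : FiniteDimensional Fq F := .of_finrank_pos (by omega)
  have : Finite F := Module.finite_of_finite Fq
  have hV := card_submodule_finrank_eq_le_gaussBinom (K := Fq) (W := Fin n → Fq) u
  rw [finrank_fin_fun] at hV
  have hW := card_linearIndependent_eq_Aq (K := Fq) (W := F) (u - (n - k))
  have hS : (_ : ℝ) ≤ _ := Nat.cast_le.mpr (card_rk_eq_le_of_lt_rk_sub (r := n - k) (u := u) C hMRD)
  rw [Nat.cast_mul, hW] at hS
  exact hS.trans (mul_le_mul_of_nonneg_right hV (hW ▸ Nat.cast_nonneg _))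

/-- Bound on the rank distribution of MRD codes: for `u ≥ d = n - k + 1`, the number of
codewords of rank `u` is at most `[n choose u]_q · A(m, u - r)` with `r = n - k`. -/
theorem stmt14 (q m n k u : ℕ) (Fq F : Type) [Field Fq] [Fintype Fq] [Field F] [Algebra Fq F]
    (hq : Fintype.card Fq = q) (hm : Module.finrank Fq F = m)
    (hk : 1 ≤ k) (hkn : k ≤ n) (hnm : n ≤ m)
    (C : Set (Fin n → F)) (hcard : Nat.card C = q ^ (m * k))
    (hMRD : ∀ c ∈ C, ∀ c' ∈ C, c ≠ c' → n - k + 1 ≤ rk Fq (c - c'))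
    (hu : n - k + 1 ≤ u) :
    (Nat.card {c : Fin n → F // c ∈ C ∧ rk Fq c = u} : ℝ) ≤
      gaussBinom q n u * Aq q m (u - (n - k)) :=
  stmt14_general q m n k u Fq F hq hm hk hkn hnm C hMRD
end

section
/- Let C ⊆ GF(q^m)^n be an MRD code (possibly nonlinear) with n ≤ m, |C| = q^{mk}, and minimum rank distance n - k + 1. For any elementary linear subspace V of dimension v with k ≤ v ≤ n, the restriction C_V = { r_V(c) : c ∈ C } ⊆ GF(q^m)^v is an MRD code of length v, cardinality q^{mk}, and minimum rank distance v - k + 1. -/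
open Matrix Submodule Module

section RankWeight

variable {Fq F : Type*} [Field Fq] [Field F] [Algebra Fq F]

lemma rk_zero {n : ℕ} : rk Fq (0 : Fin n → F) = 0 := by
  have : span Fq (Set.range (0 : Fin n → F)) = ⊥ := span_eq_bot.mpr <| by rintro _ ⟨_, rfl⟩; rfl
  rw [rk, this, finrank_bot]

lemma rk_le_length {n : ℕ} (x : Fin n → F) : rk Fq x ≤ n := by
  simpa [rk, Set.finrank] using finrank_range_le_card (R := Fq) x

lemma rk_add_le {n : ℕ} (x y : Fin n → F) : rk Fq (x + y) ≤ rk Fq x + rk Fq y := by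
  have := FiniteDimensional.span_of_finite Fq (Set.finite_range x)
  have := FiniteDimensional.span_of_finite Fq (Set.finite_range y)
  have hle : span Fq (Set.range (x + y)) ≤ span Fq (Set.range x) ⊔ span Fq (Set.range y) :=
    span_le.mpr <| Set.range_subset_iff.mpr fun j =>
      add_mem (mem_sup_left (subset_span ⟨j, rfl⟩)) (mem_sup_right (subset_span ⟨j, rfl⟩))
  exact (finrank_mono hle).trans (finrank_add_le_finrank_add_finrank _ _)

lemma rk_vecMul_map_le {p n : ℕ} (y : Fin p → F) (B : Matrix (Fin p) (Fin n) Fq) :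
    rk Fq (y ᵥ* B.map (algebraMap Fq F)) ≤ rk Fq y := by
  have := FiniteDimensional.span_of_finite Fq (Set.finite_range y)
  refine finrank_mono <| span_le.mpr <| Set.range_subset_iff.mpr fun j => ?_
  simp only [vecMul, dotProduct, map_apply, mul_comm (y _), ← Algebra.smul_def, SetLike.mem_coe]
  exact sum_mem fun i _ => smul_mem _ _ (subset_span ⟨i, rfl⟩)

lemma rk_le_finrank_of_isElementary {n : ℕ} {W : Submodule F (Fin n → F)}
    (hW : IsElementary Fq W) {x : Fin n → F} (hx : x ∈ W) : rk Fq x ≤ finrank F W := by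
  obtain ⟨b, hb⟩ := hW
  choose B hB using hb
  have hx : x = (fun i => b.repr ⟨x, hx⟩ i) ᵥ* (Matrix.of B).map (algebraMap Fq F) := by
    ext j
    have hsum : ((∑ i, b.repr ⟨x, hx⟩ i • b i : W) : Fin n → F) = x :=
      congr_arg Subtype.val (b.sum_repr ⟨x, hx⟩)
    conv_lhs => rw [← hsum]
    simp only [vecMul, dotProduct, map_apply, of_apply, hB, coe_sum, Finset.sum_apply, coe_smul,
      Pi.smul_apply, smul_eq_mul]
  rw [hx]
  exact (rk_vecMul_map_le _ _).trans (rk_le_length _)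

end RankWeight

section RowSpace

variable {F : Type*} [Field F] {v n : ℕ}

lemma finrank_span_rows_of_mul_eq_one {M : Matrix (Fin v) (Fin n) F} {N : Matrix (Fin n) (Fin v) F}
    (h : M * N = 1) : finrank F (span F (Set.range M.row)) = v := by
  refine le_antisymm ?_ ?_
  · exact (rank_eq_finrank_span_row M).symm.trans_le M.rank_le_height
  · rw [← rank_eq_finrank_span_row]
    simpa [h] using M.rank_mul_le_left N

lemma vecMul_vecMul_eq_self_of_mem_span_rows {M : Matrix (Fin v) (Fin n) F}
    {N : Matrix (Fin n) (Fin v) F} (h : M * N = 1) {x : Fin n → F}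
    (hx : x ∈ span F (Set.range M.row)) : x ᵥ* N ᵥ* M = x := by
  rw [← range_vecMulLinear] at hx
  obtain ⟨y, rfl⟩ := hx
  simp [vecMul_vecMul, h]

lemma finrank_eq_sub_of_isCompl_span_rows {M : Matrix (Fin v) (Fin n) F}
    {N : Matrix (Fin n) (Fin v) F} (h : M * N = 1) {V' : Submodule F (Fin n → F)}
    (hcompl : IsCompl (span F (Set.range M.row)) V') : finrank F V' = n - v := by
  have := Submodule.finrank_add_eq_of_isCompl hcompl
  rw [finrank_span_rows_of_mul_eq_one h, finrank_fin_fun] at this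
  omega

end RowSpace

section Restriction

variable {Fq F : Type*} [Field Fq] [Field F] [Algebra Fq F] {v n : ℕ}

/-- The paper's `r_V(x) = x_V B^{-R}`. -/
noncomputable def restriction (V V' : Submodule F (Fin n → F)) (hcompl : IsCompl V V')
    (Br : Matrix (Fin n) (Fin v) Fq) : (Fin n → F) →ₗ[F] Fin v → F :=
  (Br.map (algebraMap Fq F)).vecMulLinear ∘ₗ V.projection V' hcompl

lemma rk_le_rk_restriction_add {B : Matrix (Fin v) (Fin n) Fq} {Br : Matrix (Fin n) (Fin v) Fq}
    (hBr : B.map (algebraMap Fq F) * Br.map (algebraMap Fq F) = 1)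
    {V V' : Submodule F (Fin n → F)} (hV : V ≤ span F (Set.range (B.map (algebraMap Fq F)).row))
    (hV' : IsElementary Fq V') (hcompl : IsCompl V V') (d : Fin n → F) :
    rk Fq d ≤ rk Fq (restriction V V' hcompl Br d) + finrank F V' := by
  set y := restriction V V' hcompl Br d
  set dV := V.projection V' hcompl d
  have hdV : dV = y ᵥ* B.map (algebraMap Fq F) :=
    (vecMul_vecMul_eq_self_of_mem_span_rows hBr (hV (projection_apply_mem hcompl d))).symm
  have hdV' : d - dV ∈ V' := by
    rw [← projection_eq_self_sub_projection]
    exact projection_apply_mem _ _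
  calc rk Fq d = rk Fq (y ᵥ* B.map (algebraMap Fq F) + (d - dV)) := by rw [← hdV, add_sub_cancel]
    _ ≤ rk Fq (y ᵥ* B.map (algebraMap Fq F)) + rk Fq (d - dV) := rk_add_le _ _
    _ ≤ rk Fq y + finrank F V' :=
      add_le_add (rk_vecMul_map_le _ _) (rk_le_finrank_of_isElementary hV' hdV')

end Restriction

def HasMinRankDist (Fq : Type*) {F : Type*} [Field Fq] [Field F] [Algebra Fq F] {n : ℕ}
    (C : Set (Fin n → F)) (δ : ℕ) : Prop :=
  ∀ c ∈ C, ∀ c' ∈ C, c ≠ c' → δ ≤ rk Fq (c - c')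

namespace HasMinRankDist

variable {Fq F : Type*} [Field Fq] [Field F] [Algebra Fq F] {p n s δ : ℕ} {C : Set (Fin n → F)}
  {G : Type*} [FunLike G (Fin n → F) (Fin p → F)] [AddMonoidHomClass G (Fin n → F) (Fin p → F)]
  {f : G}

lemma injOn_of_rk_le_rk_add (hC : HasMinRankDist Fq C (δ + s)) (hδ : 0 < δ)
    (hf : ∀ d, rk Fq d ≤ rk Fq (f d) + s) : Set.InjOn f C := by
  intro c hc c' hc' heq
  by_contra hne
  have := (hC c hc c' hc' hne).trans (hf _)
  rw [map_sub, heq, sub_self, rk_zero] at this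
  omega

lemma image_of_rk_le_rk_add (hC : HasMinRankDist Fq C (δ + s))
    (hf : ∀ d, rk Fq d ≤ rk Fq (f d) + s) : HasMinRankDist Fq (f '' C) δ := by
  rintro _ ⟨c, hc, rfl⟩ _ ⟨c', hc', rfl⟩ hne
  have := (hC c hc c' hc' (ne_of_apply_ne f hne)).trans (hf _)
  rw [map_sub] at this
  omega

end HasMinRankDist

theorem stmt15_general (q m n k v : ℕ) (Fq F : Type) [Field Fq] [Field F] [Algebra Fq F]
    (hkv : k ≤ v) (hvn : v ≤ n)
    (C : Set (Fin n → F)) (hcard : Nat.card C = q ^ (m * k))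
    (hMRD : ∀ c ∈ C, ∀ c' ∈ C, c ≠ c' → n - k + 1 ≤ rk Fq (c - c'))
    (B : Matrix (Fin v) (Fin n) Fq) (Br : Matrix (Fin n) (Fin v) Fq) (hBr : B * Br = 1)
    (V V' : Submodule F (Fin n → F))
    (hVdef : V = Submodule.span F (Set.range fun i => fun j => algebraMap Fq F (B i j)))
    (hV' : IsElementary Fq V') (hcompl : IsCompl V V')
    (CV : Set (Fin v → F))
    (hCV : CV = (fun c => Matrix.vecMul
        ((Submodule.linearProjOfIsCompl V V' hcompl c : Fin n → F))
        (Br.map (algebraMap Fq F))) '' C) :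
    Nat.card CV = q ^ (m * k) ∧
    ∀ x ∈ CV, ∀ y ∈ CV, x ≠ y → v - k + 1 ≤ rk Fq (x - y) := by
  have hBrF : B.map (algebraMap Fq F) * Br.map (algebraMap Fq F) = 1 := by
    rw [← Matrix.map_mul, hBr, Matrix.map_one _ (map_zero _) (map_one _)]
  have hV : V = span F (Set.range (B.map (algebraMap Fq F)).row) := hVdef
  have hrk (d : Fin n → F) : rk Fq d ≤ rk Fq (restriction V V' hcompl Br d) + (n - v) := by
    rw [← finrank_eq_sub_of_isCompl_span_rows hBrF (hV ▸ hcompl)]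
    exact rk_le_rk_restriction_add hBrF hV.le hV' hcompl d
  have hC : HasMinRankDist Fq C (v - k + 1 + (n - v)) := by
    rw [show v - k + 1 + (n - v) = n - k + 1 by omega]
    exact hMRD
  have hCV' : CV = restriction V V' hcompl Br '' C := hCV
  subst hCV'
  exact ⟨by rw [Nat.card_image_of_injOn (hC.injOn_of_rk_le_rk_add (Nat.succ_pos _) hrk), hcard],
    hC.image_of_rk_le_rk_add hrk⟩

/-- The restriction of an MRD code to an elementary linear subspace `V` of dimension `v`
(`k ≤ v ≤ n`), via `r_V(x) = x_V · B^{-R}`, is an MRD code of length `v`, cardinality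
`q^{mk}` and minimum rank distance `v - k + 1`. -/
theorem stmt15 (q m n k v : ℕ) (Fq F : Type) [Field Fq] [Fintype Fq] [Field F] [Algebra Fq F]
    (hq : Fintype.card Fq = q) (hm : Module.finrank Fq F = m)
    (hk : 1 ≤ k) (hkv : k ≤ v) (hvn : v ≤ n) (hnm : n ≤ m)
    (C : Set (Fin n → F)) (hcard : Nat.card C = q ^ (m * k))
    (hMRD : ∀ c ∈ C, ∀ c' ∈ C, c ≠ c' → n - k + 1 ≤ rk Fq (c - c'))
    (B : Matrix (Fin v) (Fin n) Fq) (Br : Matrix (Fin n) (Fin v) Fq) (hBr : B * Br = 1)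
    (V V' : Submodule F (Fin n → F))
    (hVdef : V = Submodule.span F (Set.range fun i => fun j => algebraMap Fq F (B i j)))
    (hV' : IsElementary Fq V') (hcompl : IsCompl V V')
    (CV : Set (Fin v → F))
    (hCV : CV = (fun c => Matrix.vecMul
        ((Submodule.linearProjOfIsCompl V V' hcompl c : Fin n → F))
        (Br.map (algebraMap Fq F))) '' C) :
    Nat.card CV = q ^ (m * k) ∧
    ∀ x ∈ CV, ∀ y ∈ CV, x ≠ y → v - k + 1 ≤ rk Fq (x - y) :=
  stmt15_general q m n k v Fq F hkv hvn C hcard hMRD B Br hBr V V' hVdef hV' hcompl CV hCV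
end
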